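/- Let q > 2 and let β satisfy β > q/2 − 1. Then there exist δ > 0 and c > 0 such that for every p > 2 with |p − q| ≤ δ and every s > 0: |s^{p/2−1} − s^{q/2−1}| ≤ c·|p − q|·(1 + s^β). -/

import Mathlib

/-!
For fixed `s > 0` the map `t ↦ s ^ t` has derivative `s ^ t * log s`. On an exponent window
`[ε, β - ε]` this is at most `(1 + s ^ β) / ε` in absolute value: for `s ≤ 1` the factor
`s ^ ε` absorbs the logarithmic singularity at `0`, and for `s ≥ 1` the bound `log s ≤ s ^ ε / ε`
leaves room up to `s ^ β`. The mean value theorem then gives the estimate, with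
`t = p / 2 - 1` near `q / 2 - 1`.
-/

open Real Set

lemma abs_log_mul_rpow_le {s ε t β : ℝ} (hs : 0 < s) (hε : 0 < ε) (hεt : ε ≤ t)
    (htβ : t + ε ≤ β) : |log s| * s ^ t ≤ (1 + s ^ β) / ε := by
  have hsβ : 0 ≤ s ^ β := rpow_nonneg hs.le β
  rcases le_or_gt s 1 with hs1 | hs1
  · have hlog : |log s * s ^ ε| ≤ 1 / ε := (abs_log_mul_self_rpow_lt s ε hs hs1 hε).le
    have hpow : s ^ (t - ε) ≤ 1 := rpow_le_one hs.le hs1 (by linarith)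
    calc |log s| * s ^ t = |log s * s ^ ε| * s ^ (t - ε) := by
          rw [abs_mul, abs_of_pos (rpow_pos_of_pos hs ε), mul_assoc, ← rpow_add hs,
            add_sub_cancel]
      _ ≤ 1 / ε * 1 := by gcongr
      _ ≤ (1 + s ^ β) / ε := by rw [mul_one]; gcongr; linarith
  · have hlog : log s ≤ s ^ ε / ε := log_le_rpow_div hs.le hε
    have hpow : s ^ (ε + t) ≤ s ^ β := rpow_le_rpow_of_exponent_le hs1.le (by linarith)
    calc |log s| * s ^ t = log s * s ^ t := by rw [abs_of_pos (log_pos hs1)]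
      _ ≤ s ^ ε / ε * s ^ t := by gcongr
      _ = s ^ (ε + t) / ε := by rw [rpow_add hs]; ring
      _ ≤ (1 + s ^ β) / ε := by gcongr; linarith

lemma abs_rpow_sub_rpow_le_of_mem_Icc {s ε β x y : ℝ} (hs : 0 < s) (hε : 0 < ε)
    (hx : x ∈ Icc ε (β - ε)) (hy : y ∈ Icc ε (β - ε)) :
    |s ^ x - s ^ y| ≤ (1 + s ^ β) / ε * |x - y| := by
  refine (convex_Icc ε (β - ε)).norm_image_sub_le_of_norm_hasDerivWithin_le
    (fun t _ ↦ (hasStrictDerivAt_const_rpow hs t).hasDerivAt.hasDerivWithinAt)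
    (fun t ht ↦ ?_) hy hx
  rw [Real.norm_eq_abs, abs_mul, abs_of_pos (rpow_pos_of_pos hs t), mul_comm]
  exact abs_log_mul_rpow_le hs hε ht.1 (by linarith [ht.2])

/-- Scalar core of estimate (4.1), slow diffusion case: for `q > 2` and
`β > q/2 - 1` there are `δ, c > 0` such that for all `p > 2` with `|p - q| ≤ δ`
and all `s > 0`, `|s^{p/2-1} - s^{q/2-1}| ≤ c |p - q| (1 + s^β)`. -/
theorem stmt19 (q β : ℝ) (hq : 2 < q) (hβ : q / 2 - 1 < β) :
    ∃ δ > 0, ∃ c > 0, ∀ p : ℝ, 2 < p → |p - q| ≤ δ →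
      ∀ s : ℝ, 0 < s →
        |s ^ (p / 2 - 1) - s ^ (q / 2 - 1)| ≤ c * |p - q| * (1 + s ^ β) := by
  set δ := min (q / 2 - 1) (β - (q / 2 - 1))
  have hδ : 0 < δ := lt_min (by linarith) (by linarith)
  refine ⟨δ, hδ, 1 / δ, by positivity, fun p _ hpq s hs ↦ ?_⟩
  have hδb : δ ≤ q / 2 - 1 := min_le_left _ _
  have hδβ : δ ≤ β - (q / 2 - 1) := min_le_right _ _
  have hpq' := abs_le.mp hpq
  have hp_mem : p / 2 - 1 ∈ Icc (δ / 2) (β - δ / 2) := ⟨by linarith, by linarith⟩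
  have hq_mem : q / 2 - 1 ∈ Icc (δ / 2) (β - δ / 2) := ⟨by linarith, by linarith⟩
  calc |s ^ (p / 2 - 1) - s ^ (q / 2 - 1)|
      ≤ (1 + s ^ β) / (δ / 2) * |p / 2 - 1 - (q / 2 - 1)| :=
        abs_rpow_sub_rpow_le_of_mem_Icc hs (half_pos hδ) hp_mem hq_mem
    _ = 1 / δ * |p - q| * (1 + s ^ β) := by
        rw [show p / 2 - 1 - (q / 2 - 1) = (p - q) / 2 by ring, abs_div, abs_two]
        field_simp
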